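/- Let α, h, d be positive real constants with d < h/α². Then the equation (1 − e^{−αx})·(h − d·α²) = α·h·x·e^{−αx} has exactly one solution x* in (0,∞); moreover, for any K > 0, the function H(x) := ( K·(1 − e^{−αx}) − K·α²·d/h ) / (α·x − 1 + e^{−αx}) is strictly increasing on (0, x*] and strictly decreasing on [x*, ∞), so that H attains its maximum over (0,∞) uniquely at x*. -/

import Mathlib

/-- The dual functional of the fluid-queue example expressed through the
threshold: `H(x) = (K(1 - e^{-αx}) - Kα²d/h) / (αx - 1 + e^{-αx})`. -/
noncomputable def Hfun (α h d K x : ℝ) : ℝ :=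
  (K * (1 - Real.exp (-α * x)) - K * α ^ 2 * d / h) /
    (α * x - 1 + Real.exp (-α * x))

/-!
With `c = h - dα² ∈ (0, h)` and `ψ(t) = c(eᵗ - 1) - ht`, the equation for `x*` reads
`e^{-αx} ψ(αx) = 0`, and `H'(x) = -Kα e^{-αx} ψ(αx) / (h (αx - 1 + e^{-αx})²)`.
The function `ψ` is strictly convex with `ψ(0) = 0`, `ψ(log (h/c)) < 0` and `ψ(2h/c) > 0`, so it
has exactly one positive zero `t*`, is negative on `(0, t*)` and positive beyond `t*`. Hence
`x* = t*/α`, and `H` increases before `x*` and decreases after it.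
-/

open Real Set

namespace StrictConvexOn

variable {s : Set ℝ} {f : ℝ → ℝ} {a b x : ℝ}

theorem neg_of_mem_Ioo_of_eq_zero (hf : StrictConvexOn ℝ s f) (ha : a ∈ s) (hb : b ∈ s)
    (hfa : f a = 0) (hfb : f b = 0) (hx : x ∈ Ioo a b) : f x < 0 := by
  have hslope := hf.slope_strict_mono_adjacent ha hb hx.1 hx.2
  rw [hfa, hfb, sub_zero] at hslope
  by_contra! hfx
  have hleft : 0 ≤ f x / (x - a) := div_nonneg hfx (sub_pos.2 hx.1).le
  have hright : (0 - f x) / (b - x) ≤ 0 :=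
    div_nonpos_of_nonpos_of_nonneg (by linarith) (sub_pos.2 hx.2).le
  linarith

theorem pos_of_eq_zero_of_lt (hf : StrictConvexOn ℝ s f) (ha : a ∈ s) (hx : x ∈ s)
    (hfa : f a = 0) (hfb : f b = 0) (hab : a < b) (hbx : b < x) : 0 < f x := by
  have hslope := hf.slope_strict_mono_adjacent ha hx hab hbx
  rw [hfa, hfb, sub_zero, zero_div, sub_zero] at hslope
  exact (div_pos_iff_of_pos_right (sub_pos.2 hbx)).1 hslope

end StrictConvexOn

noncomputable def psi (c h t : ℝ) : ℝ := c * (exp t - 1) - h * t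

section psi

variable {c h : ℝ}

@[simp] theorem psi_zero : psi c h 0 = 0 := by simp [psi]

theorem continuous_psi : Continuous (psi c h) := by unfold psi; fun_prop

theorem strictConvexOn_psi (hc : 0 < c) : StrictConvexOn ℝ univ (psi c h) := by
  refine ⟨convex_univ, fun x _ y _ hxy a b ha hb hab => ?_⟩
  have hexp := strictConvexOn_exp.2 (mem_univ x) (mem_univ y) hxy ha hb hab
  simp only [smul_eq_mul, psi] at hexp ⊢
  have hb' : b = 1 - a := by linarith
  subst hb'
  nlinarith [mul_lt_mul_of_pos_left hexp hc]

theorem psi_log_div_neg (hc : 0 < c) (hch : c < h) : psi c h (log (h / c)) < 0 := by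
  have hh : 0 < h := hc.trans hch
  have hlog : log (c / h) < c / h - 1 :=
    log_lt_sub_one_of_pos (div_pos hc hh) ((div_lt_one hh).2 hch).ne
  have hlog_inv : log (c / h) = -log (h / c) := by rw [← log_inv, inv_div]
  have key := mul_lt_mul_of_pos_left hlog hh
  rw [hlog_inv, mul_sub, mul_div_cancel₀ _ hh.ne'] at key
  simp only [psi, exp_log (div_pos hh hc), mul_sub, mul_div_cancel₀ _ hc.ne']
  linarith

theorem psi_two_mul_div_pos (hc : 0 < c) (hch : c < h) : 0 < psi c h (2 * h / c) := by
  have hh : 0 < h := hc.trans hch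
  set T := 2 * h / c
  have hcT : c * T = 2 * h := mul_div_cancel₀ _ hc.ne'
  have hquad := quadratic_le_exp_of_nonneg (by positivity : 0 ≤ T)
  have key : psi c h T = c * (exp T - (1 + T + T ^ 2 / 2)) + 2 * h := by
    simp only [psi]
    linear_combination (1 + T / 2) * hcT
  rw [key]
  have := mul_nonneg hc.le (sub_nonneg.2 hquad)
  linarith

theorem log_div_le_two_mul_div (hc : 0 < c) (hch : c < h) : log (h / c) ≤ 2 * h / c := by
  have hh : 0 < h := hc.trans hch
  have := log_le_sub_one_of_pos (div_pos hh hc)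
  have : 0 ≤ h / c := by positivity
  rw [mul_div_assoc]
  linarith

theorem exists_pos_psi_eq_zero (hc : 0 < c) (hch : c < h) : ∃ t, 0 < t ∧ psi c h t = 0 := by
  obtain ⟨t, ht, hψt⟩ := intermediate_value_Icc (log_div_le_two_mul_div hc hch)
    continuous_psi.continuousOn ⟨(psi_log_div_neg hc hch).le, (psi_two_mul_div_pos hc hch).le⟩
  exact ⟨t, (log_pos ((one_lt_div hc).2 hch)).trans_le ht.1, hψt⟩

variable {t s : ℝ}

theorem psi_neg_of_pos_of_lt (hc : 0 < c) (hψt : psi c h t = 0) (hs : 0 < s) (hst : s < t) :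
    psi c h s < 0 :=
  (strictConvexOn_psi hc).neg_of_mem_Ioo_of_eq_zero (mem_univ 0) (mem_univ t) psi_zero hψt
    ⟨hs, hst⟩

theorem psi_pos_of_lt (hc : 0 < c) (ht : 0 < t) (hψt : psi c h t = 0) (hts : t < s) :
    0 < psi c h s :=
  (strictConvexOn_psi hc).pos_of_eq_zero_of_lt (mem_univ 0) (mem_univ s) psi_zero hψt ht hts

theorem psi_eq_zero_iff (hc : 0 < c) (ht : 0 < t) (hψt : psi c h t = 0) (hs : 0 < s) :
    psi c h s = 0 ↔ s = t := by
  refine ⟨fun hψs => ?_, fun hst => hst ▸ hψt⟩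
  rcases lt_trichotomy s t with hst | hst | hst
  · exact absurd hψs (psi_neg_of_pos_of_lt hc hψt hs hst).ne
  · exact hst
  · exact absurd hψs (psi_pos_of_lt hc ht hψt hst).ne'

end psi

theorem one_sub_exp_neg_mul_sub_eq (c h u : ℝ) :
    (1 - exp (-u)) * c - h * u * exp (-u) = exp (-u) * psi c h u := by
  have hexp : exp (-u) * exp u = 1 := by rw [← exp_add, neg_add_cancel, exp_zero]
  simp only [psi]
  linear_combination (-c) * hexp

theorem one_sub_exp_neg_mul_eq_iff (α c h x : ℝ) :
    (1 - exp (-α * x)) * c = α * h * x * exp (-α * x) ↔ psi c h (α * x) = 0 := by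
  have key : (1 - exp (-α * x)) * c - α * h * x * exp (-α * x) =
      exp (-α * x) * psi c h (α * x) := by
    rw [neg_mul, ← one_sub_exp_neg_mul_sub_eq]; ring
  rw [← sub_eq_zero, key, mul_eq_zero, or_iff_right (exp_pos _).ne']

theorem mul_sub_one_add_exp_neg_mul_pos {α x : ℝ} (hx : 0 < α * x) :
    0 < α * x - 1 + exp (-α * x) := by
  have := add_one_lt_exp (neg_ne_zero.2 hx.ne')
  rw [neg_mul]
  linarith

theorem hasDerivAt_Hfun {α h d K x : ℝ} (hh : h ≠ 0) (hx : 0 < α * x) :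
    HasDerivAt (Hfun α h d K)
      (K * α * exp (-α * x) / (h * (α * x - 1 + exp (-α * x)) ^ 2) *
        -psi (h - d * α ^ 2) h (α * x)) x := by
  have hD := (mul_sub_one_add_exp_neg_mul_pos hx).ne'
  have hexp : HasDerivAt (fun y => exp (-α * y)) (exp (-α * x) * -α) x :=
    ((hasDerivAt_id x).const_mul (-α)).exp.congr_deriv (by simp)
  have hnum := ((hexp.const_sub 1).const_mul K).sub_const (K * α ^ 2 * d / h)
  have hden := (((hasDerivAt_id x).const_mul α).sub_const 1).add hexp
  refine (hnum.div hden hD).congr_deriv ?_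
  have hexp_mul : exp (-α * x) * exp (α * x) = 1 := by rw [← exp_add]; simp
  simp only [psi, Pi.add_apply, id, neg_mul] at hD hexp_mul ⊢
  field_simp
  linear_combination (K * α * h - K * α ^ 3 * d) * hexp_mul

section Hfun

variable {α h d K xs : ℝ}

theorem Hfun_deriv_coeff_pos (hα : 0 < α) (hh : 0 < h) (hK : 0 < K) {x : ℝ} (hx : 0 < x) :
    0 < K * α * exp (-α * x) / (h * (α * x - 1 + exp (-α * x)) ^ 2) :=
  have := mul_sub_one_add_exp_neg_mul_pos (mul_pos hα hx)
  by positivity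

theorem Hfun_strictMonoOn (hα : 0 < α) (hh : 0 < h) (hK : 0 < K) (hc : 0 < h - d * α ^ 2)
    (hψ : psi (h - d * α ^ 2) h (α * xs) = 0) : StrictMonoOn (Hfun α h d K) (Ioc 0 xs) := by
  refine strictMonoOn_of_deriv_pos (convex_Ioc 0 xs) (fun x hx => ?_) (fun x hx => ?_)
  · exact (hasDerivAt_Hfun hh.ne' (mul_pos hα hx.1)).continuousAt.continuousWithinAt
  · rw [interior_Ioc] at hx
    have hψx := psi_neg_of_pos_of_lt hc hψ (mul_pos hα hx.1) (mul_lt_mul_of_pos_left hx.2 hα)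
    rw [(hasDerivAt_Hfun hh.ne' (mul_pos hα hx.1)).deriv]
    exact mul_pos (Hfun_deriv_coeff_pos hα hh hK hx.1) (neg_pos.2 hψx)

theorem Hfun_strictAntiOn (hα : 0 < α) (hh : 0 < h) (hK : 0 < K) (hc : 0 < h - d * α ^ 2)
    (hxs : 0 < xs) (hψ : psi (h - d * α ^ 2) h (α * xs) = 0) :
    StrictAntiOn (Hfun α h d K) (Ici xs) := by
  refine strictAntiOn_of_deriv_neg (convex_Ici xs) (fun x hx => ?_) (fun x hx => ?_)
  · exact (hasDerivAt_Hfun hh.ne' (mul_pos hα (hxs.trans_le hx))).continuousAt.continuousWithinAt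
  · rw [interior_Ici] at hx
    have hx0 := hxs.trans hx
    have hψx := psi_pos_of_lt hc (mul_pos hα hxs) hψ (mul_lt_mul_of_pos_left hx hα)
    rw [(hasDerivAt_Hfun hh.ne' (mul_pos hα hx0)).deriv]
    exact mul_neg_of_pos_of_neg (Hfun_deriv_coeff_pos hα hh hK hx0) (neg_neg_iff_pos.2 hψx)

end Hfun

/-- Let `α, h, d > 0` with `d < h/α²`.  Then the equation
`(1 - e^{-αx})(h - dα²) = αhx e^{-αx}` has exactly one solution `x* ∈ (0,∞)`;
moreover, for any `K > 0`, the function `H` is strictly increasing on `(0, x*]`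
and strictly decreasing on `[x*, ∞)`, so `H` attains its maximum over `(0,∞)`
uniquely at `x*`. -/
theorem stmt15 (α h d : ℝ) (hα : 0 < α) (hh : 0 < h) (hd : 0 < d)
    (hdh : d < h / α ^ 2) :
    (∃! x : ℝ, 0 < x ∧
      (1 - Real.exp (-α * x)) * (h - d * α ^ 2) = α * h * x * Real.exp (-α * x)) ∧
    ∀ xs : ℝ,
      (0 < xs ∧
        (1 - Real.exp (-α * xs)) * (h - d * α ^ 2)
          = α * h * xs * Real.exp (-α * xs)) →
      ∀ K : ℝ, 0 < K →
        StrictMonoOn (Hfun α h d K) (Set.Ioc 0 xs) ∧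
        StrictAntiOn (Hfun α h d K) (Set.Ici xs) ∧
        ∀ y : ℝ, 0 < y → y ≠ xs → Hfun α h d K y < Hfun α h d K xs := by
  have hc : 0 < h - d * α ^ 2 := by
    have := (lt_div_iff₀ (by positivity)).1 hdh
    linarith
  have hch : h - d * α ^ 2 < h := by
    have : 0 < d * α ^ 2 := by positivity
    linarith
  simp only [one_sub_exp_neg_mul_eq_iff]
  obtain ⟨t, ht, hψt⟩ := exists_pos_psi_eq_zero hc hch
  refine ⟨⟨t / α, ⟨div_pos ht hα, by rwa [mul_div_cancel₀ _ hα.ne']⟩, ?_⟩, ?_⟩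
  · rintro y ⟨hy, hψy⟩
    rw [eq_div_iff hα.ne', mul_comm, ← psi_eq_zero_iff hc ht hψt (mul_pos hα hy)]
    exact hψy
  · rintro xs ⟨hxs, hψxs⟩ K hK
    have hmono := Hfun_strictMonoOn hα hh hK hc hψxs
    have hanti := Hfun_strictAntiOn hα hh hK hc hxs hψxs
    refine ⟨hmono, hanti, fun y hy hyxs => ?_⟩
    rcases hyxs.lt_or_gt with hlt | hgt
    · exact hmono ⟨hy, hlt.le⟩ ⟨hxs, le_rfl⟩ hlt
    · exact hanti self_mem_Ici hgt.le hgt
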